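/- arXiv:1303.1208 — 2 statements merged into one kernel-verified Lean document; each statement's English description precedes it below -/
import Mathlib

section
/- Let F and H be probability measures on ℝ absolutely continuous with respect to Lebesgue measure, with densities f and h. Then ν*(F,H) equals the essential infimum of f(x)/h(x) over x in the support of H (i.e., over {x : h(x) > 0}). -/
open MeasureTheory

/-- The mixture `(1-a)·P + a·Q` of two measures. -/
noncomputable def mix {X : Type*} [MeasurableSpace X] (a : ℝ) (P Q : Measure X) :
    Measure X :=
  ENNReal.ofReal (1 - a) • P + ENNReal.ofReal a • Q

/-- `G` is irreducible with respect to `H`: no decomposition `G = γ·H + (1-γ)·F'`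
with `F'` a probability measure and `0 < γ ≤ 1`. -/
def Irred {X : Type*} [MeasurableSpace X] (G H : Measure X) : Prop :=
  ¬ ∃ (γ : ℝ) (F' : Measure X), IsProbabilityMeasure F' ∧ 0 < γ ∧ γ ≤ 1 ∧
      G = mix γ F' H

/-- Mutual irreducibility. -/
def MutIrred {X : Type*} [MeasurableSpace X] (P Q : Measure X) : Prop :=
  Irred P Q ∧ Irred Q P

/-- The set of feasible mixture proportions of `H` in `F`. -/
def nuSet {X : Type*} [MeasurableSpace X] (F H : Measure X) : Set ℝ :=
  {α | α ∈ Set.Icc (0:ℝ) 1 ∧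
    ∃ G' : Measure X, IsProbabilityMeasure G' ∧ F = mix α G' H}

/-- `ν*(F,H)`: the maximal proportion of `H` in `F`. -/
noncomputable def nuStar {X : Type*} [MeasurableSpace X] (F H : Measure X) : ℝ :=
  sSup (nuSet F H)

/-!
`F = (1-α)G' + αH` for some probability measure `G'` exactly when `α • H ≤ F`, with
`G' = (1-α)⁻¹ • (F - α • H)`. For densities, `α • H ≤ F` means `α h ≤ f` a.e., i.e. `α ≤ f / h`
a.e. on `{h > 0}`, and the largest such `α` is the essential infimum of `f / h` there.
-/

open Filter
open scoped ENNReal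

section

variable {X : Type*} [MeasurableSpace X]

theorem mem_nuSet_iff {F H : Measure X} [IsProbabilityMeasure F] [IsProbabilityMeasure H]
    {α : ℝ} : α ∈ nuSet F H ↔ 0 ≤ α ∧ ENNReal.ofReal α • H ≤ F := by
  constructor
  · rintro ⟨⟨hα0, -⟩, G', -, rfl⟩
    exact ⟨hα0, Measure.le_add_left le_rfl⟩
  rintro ⟨hα0, hle⟩
  have hα1 : α ≤ 1 := by simpa using hle Set.univ
  refine ⟨⟨hα0, hα1⟩, ?_⟩
  rcases hα1.eq_or_lt with rfl | hα1
  · have hHF : H = F := Measure.eq_of_le_of_isProbabilityMeasure (by simpa using hle)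
    exact ⟨F, inferInstance, by simp [mix, hHF]⟩
  have : IsFiniteMeasure (ENNReal.ofReal α • H) := H.smul_finite ENNReal.ofReal_ne_top
  set c := ENNReal.ofReal (1 - α) with hc_def
  have hc : c ≠ 0 := (ENNReal.ofReal_pos.2 (sub_pos.2 hα1)).ne'
  have hmass : (F - ENNReal.ofReal α • H) Set.univ = c := by
    have hsum := congrArg (· Set.univ) (Measure.sub_add_cancel_of_le hle)
    simp only [Measure.coe_add, Measure.coe_smul, Pi.add_apply, Pi.smul_apply, measure_univ,
      smul_eq_mul, mul_one] at hsum
    rw [hc_def, ENNReal.ofReal_sub _ hα0, ENNReal.ofReal_one]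
    exact ENNReal.eq_sub_of_add_eq ENNReal.ofReal_ne_top hsum
  refine ⟨c⁻¹ • (F - ENNReal.ofReal α • H), ⟨?_⟩, ?_⟩
  · simp [hmass, ENNReal.inv_mul_cancel hc ENNReal.ofReal_ne_top]
  · rw [mix, smul_smul, ENNReal.mul_inv_cancel hc ENNReal.ofReal_ne_top, one_smul,
      Measure.sub_add_cancel_of_le hle]

theorem withDensity_le_withDensity_iff {μ : Measure X} [SigmaFinite μ] {f g : X → ℝ≥0∞}
    (hf : AEMeasurable f μ) : μ.withDensity f ≤ μ.withDensity g ↔ f ≤ᵐ[μ] g :=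
  ⟨fun hle => ae_le_of_forall_setLIntegral_le_of_sigmaFinite₀ hf fun s hs _ => by
    simpa [withDensity_apply _ hs] using hle s, withDensity_mono⟩

theorem smul_withDensity_le_withDensity_iff {μ : Measure X} [SigmaFinite μ] {f g : X → ℝ≥0∞}
    (hg : AEMeasurable g μ) {c : ℝ≥0∞} (hc : c ≠ ∞) :
    c • μ.withDensity g ≤ μ.withDensity f ↔ ∀ᵐ x ∂μ, c * g x ≤ f x := by
  rw [← withDensity_smul' _ _ hc, withDensity_le_withDensity_iff (hg.const_smul c)]
  rfl

theorem ae_ofReal_mul_le_iff_ae_restrict_le_div {μ : Measure X} {f h : X → ℝ}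
    (hh : Measurable h) (hf0 : ∀ x, 0 ≤ f x) {α : ℝ} (hα : 0 ≤ α) :
    (∀ᵐ x ∂μ, ENNReal.ofReal α * ENNReal.ofReal (h x) ≤ ENNReal.ofReal (f x)) ↔
      ∀ᵐ x ∂μ.restrict {x | 0 < h x}, α ≤ f x / h x := by
  rw [ae_restrict_iff' (measurableSet_lt measurable_const hh)]
  refine eventually_congr (.of_forall fun x => ?_)
  by_cases hx : 0 < h x
  · rw [← ENNReal.ofReal_mul hα, ENNReal.ofReal_le_ofReal_iff (hf0 x), le_div_iff₀ hx]
    exact ⟨fun hle _ => hle, fun hle => hle hx⟩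
  · simp [ENNReal.ofReal_of_nonpos (not_lt.1 hx), hx]

theorem sSup_ae_lowerBounds_eq_essInf {μ : Measure X} {g : X → ℝ} (hg : 0 ≤ᵐ[μ] g)
    (hbdd : BddAbove {a : ℝ | 0 ≤ a ∧ ∀ᵐ x ∂μ, a ≤ g x}) :
    sSup {a : ℝ | 0 ≤ a ∧ ∀ᵐ x ∂μ, a ≤ g x} = essInf g μ := by
  obtain ⟨B, hB⟩ := hbdd
  have hcobdd : IsCoboundedUnder (· ≥ ·) (ae μ) g := ⟨B, fun a ha =>
    (le_max_left a 0).trans <| hB ⟨le_max_right a 0, by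
      filter_upwards [eventually_map.1 ha, hg] with x hx h0 using max_le hx h0⟩⟩
  have hbelow : IsBoundedUnder (· ≥ ·) (ae μ) g := ⟨0, eventually_map.2 hg⟩
  exact IsGreatest.csSup_eq ⟨⟨le_essInf_of_ae_le 0 hg, ae_essInf_le⟩,
    fun a ha => le_essInf_of_ae_le a ha.2⟩

end

theorem nuStar_eq_essInf_ratio_general
    (f h : ℝ → ℝ) (hh : Measurable h)
    (hf0 : ∀ x, 0 ≤ f x)
    (F H : Measure ℝ) [IsProbabilityMeasure F] [IsProbabilityMeasure H]
    (hF : F = volume.withDensity fun x => ENNReal.ofReal (f x))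
    (hH : H = volume.withDensity fun x => ENNReal.ofReal (h x)) :
    nuStar F H =
      essInf (fun x => f x / h x) (volume.restrict {x | 0 < h x}) := by
  have hbdd : BddAbove (nuSet F H) := ⟨1, fun α hα => hα.1.2⟩
  have hnuSet : nuSet F H =
      {α | 0 ≤ α ∧ ∀ᵐ x ∂volume.restrict {x | 0 < h x}, α ≤ f x / h x} := by
    ext α
    rw [mem_nuSet_iff, hF, hH]
    refine and_congr_right fun hα => ?_
    rw [smul_withDensity_le_withDensity_iff hh.ennreal_ofReal.aemeasurable ENNReal.ofReal_ne_top]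
    exact ae_ofReal_mul_le_iff_ae_restrict_le_div hh hf0 hα
  have hratio_nonneg : 0 ≤ᵐ[volume.restrict {x | 0 < h x}] fun x => f x / h x :=
    (ae_restrict_mem (measurableSet_lt measurable_const hh)).mono fun x hx =>
      div_nonneg (hf0 x) (le_of_lt hx)
  rw [hnuSet] at hbdd
  rw [nuStar, hnuSet]
  exact sSup_ae_lowerBounds_eq_essInf hratio_nonneg hbdd

theorem nuStar_eq_essInf_ratio
    (f h : ℝ → ℝ) (hf : Measurable f) (hh : Measurable h)
    (hf0 : ∀ x, 0 ≤ f x) (hh0 : ∀ x, 0 ≤ h x)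
    (F H : Measure ℝ) [IsProbabilityMeasure F] [IsProbabilityMeasure H]
    (hF : F = volume.withDensity fun x => ENNReal.ofReal (f x))
    (hH : H = volume.withDensity fun x => ENNReal.ofReal (h x)) :
    nuStar F H =
      essInf (fun x => f x / h x) (volume.restrict {x | 0 < h x}) :=
  nuStar_eq_essInf_ratio_general f h hh hf0 F H hF hH
end

section
/- Let π₀, π₁ ∈ [0,1) with π₀ + π₁ < 1, and let P₀, P₁ be mutually irreducible probability measures. Define P̃₀ = (1-π₀)P₀ + π₀P₁ and P̃₁ = (1-π₁)P₁ + π₁P₀. Then ν*(P̃₀, P̃₁) = π₀/(1-π₁) and ν*(P̃₁, P̃₀) = π₁/(1-π₀). -/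
open MeasureTheory

/-! Writing `α = π₀ / (1 - π₁)`, the identity `P̃₀ = (1 - α) P₀ + α P̃₁` shows `α` is feasible.
Conversely, a decomposition `P̃₀ = (1 - β) G + β P̃₁` with `β > α` can be solved for `P₀`, exhibiting
`P₀` as a proper mixture of `G` and `P₁`; irreducibility of `P₀` with respect to `P₁` forbids this. -/

section Contamination

variable {X : Type*} [MeasurableSpace X]

theorem MeasureTheory.Measure.ext_of_measureReal {μ ν : Measure X} [IsFiniteMeasure μ]
    [IsFiniteMeasure ν] (h : ∀ s, MeasurableSet s → μ.real s = ν.real s) : μ = ν :=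
  Measure.ext fun s hs =>
    (ENNReal.toReal_eq_toReal_iff' (measure_ne_top μ s) (measure_ne_top ν s)).mp (h s hs)

instance isFiniteMeasure_mix (a : ℝ) (P Q : Measure X) [IsFiniteMeasure P] [IsFiniteMeasure Q] :
    IsFiniteMeasure (mix a P Q) :=
  inferInstanceAs (IsFiniteMeasure ((1 - a).toNNReal • P + a.toNNReal • Q))

theorem mix_real_apply {a : ℝ} (ha₀ : 0 ≤ a) (ha₁ : a ≤ 1) (P Q : Measure X)
    [IsFiniteMeasure P] [IsFiniteMeasure Q] (s : Set X) :
    (mix a P Q).real s = (1 - a) * P.real s + a * Q.real s := by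
  simp only [Measure.real, mix, Measure.add_apply, Measure.smul_apply, smul_eq_mul]
  rw [ENNReal.toReal_add (by finiteness) (by finiteness)]
  simp [ha₀, ha₁]

variable {π₀ π₁ : ℝ} {P₀ P₁ : Measure X}

theorem mix_eq_mix_div_mix [IsFiniteMeasure P₀] [IsFiniteMeasure P₁] (hπ₀ : 0 ≤ π₀)
    (hπ₁ : 0 ≤ π₁) (hsum : π₀ + π₁ < 1) :
    mix π₀ P₀ P₁ = mix (π₀ / (1 - π₁)) P₀ (mix π₁ P₁ P₀) := by
  have hπ₁' : 0 < 1 - π₁ := by linarith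
  refine Measure.ext_of_measureReal fun s _ => ?_
  rw [mix_real_apply hπ₀ (by linarith), mix_real_apply (div_nonneg hπ₀ hπ₁'.le)
    ((div_le_one hπ₁').2 (by linarith)), mix_real_apply hπ₁ (by linarith)]
  field_simp
  ring

theorem exists_eq_mix_of_mix_eq_mix_mix [IsFiniteMeasure P₀] [IsFiniteMeasure P₁] {β : ℝ}
    {G : Measure X} [IsFiniteMeasure G] (hπ₀ : 0 ≤ π₀) (hπ₁ : 0 ≤ π₁) (hsum : π₀ + π₁ < 1)
    (hβ : π₀ / (1 - π₁) < β) (hβ₁ : β ≤ 1) (h : mix π₀ P₀ P₁ = mix β G (mix π₁ P₁ P₀)) :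
    ∃ γ, 0 < γ ∧ γ ≤ 1 ∧ P₀ = mix γ G P₁ := by
  have hπ₁' : 0 < 1 - π₁ := by linarith
  have hβ₀ : 0 ≤ β := (div_nonneg hπ₀ hπ₁'.le).trans hβ.le
  have hnum : 0 < β * (1 - π₁) - π₀ := by rw [div_lt_iff₀ hπ₁'] at hβ; linarith
  have hden : 0 < 1 - π₀ - β * π₁ := by nlinarith
  -- Solve `(1 - π₀) P₀ + π₀ P₁ = (1 - β) G + β (1 - π₁) P₁ + β π₁ P₀` for `P₀`.
  set γ := (β * (1 - π₁) - π₀) / (1 - π₀ - β * π₁) with hγ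
  have hγ₀ : 0 < γ := div_pos hnum hden
  have hγ₁ : γ ≤ 1 := (div_le_one hden).2 (by nlinarith)
  refine ⟨γ, hγ₀, hγ₁, Measure.ext_of_measureReal fun s _ => ?_⟩
  have hs := congrArg (Measure.real · s) h
  rw [mix_real_apply hπ₀ (by linarith), mix_real_apply hβ₀ hβ₁,
    mix_real_apply hπ₁ (by linarith)] at hs
  rw [mix_real_apply hγ₀.le hγ₁, hγ]
  field_simp
  linear_combination hs

theorem nuStar_mix_mix [IsProbabilityMeasure P₀] [IsFiniteMeasure P₁] (hπ₀ : 0 ≤ π₀)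
    (hπ₁ : 0 ≤ π₁) (hsum : π₀ + π₁ < 1) (hirr : Irred P₀ P₁) :
    nuStar (mix π₀ P₀ P₁) (mix π₁ P₁ P₀) = π₀ / (1 - π₁) := by
  have hπ₁' : 0 < 1 - π₁ := by linarith
  refine IsGreatest.csSup_eq ⟨⟨⟨div_nonneg hπ₀ hπ₁'.le, (div_le_one hπ₁').2 (by linarith)⟩,
    P₀, inferInstance, mix_eq_mix_div_mix hπ₀ hπ₁ hsum⟩, ?_⟩
  rintro β ⟨⟨-, hβ₁⟩, G, hG, h⟩
  by_contra! hβ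
  obtain ⟨γ, hγ₀, hγ₁, hP₀⟩ := exists_eq_mix_of_mix_eq_mix_mix hπ₀ hπ₁ hsum hβ hβ₁ h
  exact hirr ⟨γ, G, hG, hγ₀, hγ₁, hP₀⟩

end Contamination

theorem nuStar_of_contaminated {X : Type*} [MeasurableSpace X] (π₀ π₁ : ℝ)
    (hπ₀ : π₀ ∈ Set.Ico (0:ℝ) 1) (hπ₁ : π₁ ∈ Set.Ico (0:ℝ) 1)
    (hsum : π₀ + π₁ < 1)
    (P₀ P₁ Pt₀ Pt₁ : Measure X)
    [IsProbabilityMeasure P₀] [IsProbabilityMeasure P₁]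
    (hmi : MutIrred P₀ P₁)
    (hPt₀ : Pt₀ = mix π₀ P₀ P₁) (hPt₁ : Pt₁ = mix π₁ P₁ P₀) :
    nuStar Pt₀ Pt₁ = π₀ / (1 - π₁) ∧ nuStar Pt₁ Pt₀ = π₁ / (1 - π₀) := by
  subst hPt₀ hPt₁
  exact ⟨nuStar_mix_mix hπ₀.1 hπ₁.1 hsum hmi.1,
    nuStar_mix_mix hπ₁.1 hπ₀.1 (by linarith) hmi.2⟩
end
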